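/- Fix M ∈ ℕ. Let I be an interval with |I| > 2^{M+2}, and let J be a dyadic lagom interval, i.e., J ⊂ 𝔹_{M·2^M} with 2^{−M} ≤ |J| ≤ 2^M. Then 1 + |I|^{−1}|c(I) − c(J)| ≳ 1 + M^{−1}·rdist(I, 𝔹_{2^M}), with an absolute implicit constant (e.g., the left side is at least 1/4 of the right side when rdist(I, 𝔹_{M·2^M}) > 2, and at least 1/3 of the right side otherwise since then rdist(I, 𝔹_{2^M}) ≤ 2M). -/

import Mathlib

/-!
The union of two intervals has diameter at most the distance of their centers plus the larger
length, so `rdist(I, 𝔹_{2^M}) ≤ 1 + |c(I)|/|I|`. Since `c(J) ∈ 𝔹_{M·2^M}` and `|I| > 4·2^M`,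
`|c(I)|/|I| ≤ |I|⁻¹|c(I) − c(J)| + M/8`, and dividing by `M` (with `M⁻¹ ≤ 1`) leaves plenty of
room for the constant `1/4`.
-/

/-- `diam(I ∪ J)` for intervals given by centers and lengths. -/
noncomputable def diamUnion (c1 l1 c2 l2 : ℝ) : ℝ :=
  max (c1 + l1 / 2) (c2 + l2 / 2) - min (c1 - l1 / 2) (c2 - l2 / 2)

/-- The relative distance `rdist(I,J) = diam(I ∪ J)/max(|I|,|J|)`. -/
noncomputable def rdistI (c1 l1 c2 l2 : ℝ) : ℝ := diamUnion c1 l1 c2 l2 / max l1 l2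

lemma diamUnion_le (c1 l1 c2 l2 : ℝ) :
    diamUnion c1 l1 c2 l2 ≤ |c1 - c2| + max l1 l2 := by
  unfold diamUnion
  have hl1 := le_max_left l1 l2
  have hl2 := le_max_right l1 l2
  have hup : max (c1 + l1 / 2) (c2 + l2 / 2) ≤ max c1 c2 + max l1 l2 / 2 :=
    max_le (by linarith [le_max_left c1 c2]) (by linarith [le_max_right c1 c2])
  have hlow : min c1 c2 - max l1 l2 / 2 ≤ min (c1 - l1 / 2) (c2 - l2 / 2) :=
    le_min (by linarith [min_le_left c1 c2]) (by linarith [min_le_right c1 c2])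
  have hspread : max c1 c2 - min c1 c2 = |c1 - c2| := max_sub_min_eq_abs' c1 c2
  linarith

lemma rdistI_le_one_add {c1 l1 c2 l2 : ℝ} (hl : 0 < max l1 l2) :
    rdistI c1 l1 c2 l2 ≤ 1 + |c1 - c2| / max l1 l2 := by
  rw [rdistI, div_le_iff₀ hl, add_mul, one_mul, div_mul_cancel₀ _ hl.ne']
  linarith [diamUnion_le c1 l1 c2 l2]

lemma abs_center_le_of_Icc_subset {c l R : ℝ} (hl : 0 ≤ l)
    (hsub : Set.Icc (c - l / 2) (c + l / 2) ⊆ Set.Icc (-R) R) : |c| ≤ R :=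
  abs_le.mpr (hsub ⟨by linarith, by linarith⟩)

theorem statement12_general (M : ℕ) (cI lI cJ lJ : ℝ)
    (hlI : (2 : ℝ) ^ (M + 2) < lI) (hlJ : 0 < lJ)
    (hJsub : Set.Icc (cJ - lJ / 2) (cJ + lJ / 2) ⊆
      Set.Icc (-((M : ℝ) * 2 ^ M / 2)) ((M : ℝ) * 2 ^ M / 2)) :
    (1 / 4) * (1 + (M : ℝ)⁻¹ * rdistI cI lI 0 (2 ^ M)) ≤ 1 + |cI - cJ| / lI := by
  set x := |cI - cJ| / lI
  have h2M : (0 : ℝ) < 2 ^ M := by positivity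
  have hlI' : 4 * 2 ^ M < lI := by rwa [pow_add, mul_comm, show (2 : ℝ) ^ 2 = 4 by norm_num] at hlI
  have hlI0 : 0 < lI := by linarith
  have hrdist : rdistI cI lI 0 (2 ^ M) ≤ 1 + |cI| / lI := by
    have hmax : max lI (2 ^ M) = lI := max_eq_left (by linarith)
    have h := rdistI_le_one_add (c1 := cI) (c2 := 0) (hmax ▸ hlI0)
    rwa [hmax, sub_zero] at h
  have hcI : |cI| / lI ≤ x + M / 8 := by
    have hcJ := abs_center_le_of_Icc_subset hlJ.le hJsub
    have htri : |cI| ≤ |cI - cJ| + |cJ| := by simpa using abs_sub_le cI cJ 0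
    have hbox : (M : ℝ) * 2 ^ M / 2 ≤ M / 8 * lI := by
      nlinarith [Nat.cast_nonneg (α := ℝ) M]
    rw [div_le_iff₀ hlI0, add_mul, div_mul_cancel₀ _ hlI0.ne']
    linarith
  have hx : 0 ≤ x := by positivity
  have hscaled : (M : ℝ)⁻¹ * rdistI cI lI 0 (2 ^ M) ≤ (1 + x) + 1 / 8 := calc
    (M : ℝ)⁻¹ * rdistI cI lI 0 (2 ^ M) ≤ (M : ℝ)⁻¹ * (1 + x + M / 8) := by
      gcongr; linarith
    _ = (M : ℝ)⁻¹ * (1 + x) + (M : ℝ)⁻¹ * M / 8 := by ring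
    _ ≤ (1 + x) + 1 / 8 := by
      gcongr
      · exact mul_le_of_le_one_left (by positivity) (Nat.cast_inv_le_one M)
      · exact inv_mul_le_one
  linarith

/-- For an interval `I` with `|I| > 2^{M+2}` and a dyadic lagom interval `J`
(`J ⊆ 𝔹_{M·2^M}`, `2^{−M} ≤ |J| ≤ 2^M`), one has
`1 + |I|⁻¹|c(I) − c(J)| ≥ (1/4)(1 + M⁻¹ rdist(I, 𝔹_{2^M}))`. -/
theorem statement12 (M : ℕ) (hM : 1 ≤ M) (cI lI cJ lJ : ℝ)
    (hlI : (2 : ℝ) ^ (M + 2) < lI) (hlJ : 0 < lJ)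
    (hJlo : (2 : ℝ) ^ (-(M : ℤ)) ≤ lJ) (hJhi : lJ ≤ 2 ^ M)
    (hJsub : Set.Icc (cJ - lJ / 2) (cJ + lJ / 2) ⊆
      Set.Icc (-((M : ℝ) * 2 ^ M / 2)) ((M : ℝ) * 2 ^ M / 2)) :
    (1 / 4) * (1 + (M : ℝ)⁻¹ * rdistI cI lI 0 (2 ^ M)) ≤ 1 + |cI - cJ| / lI :=
  statement12_general M cI lI cJ lJ hlI hlJ hJsub
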